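/- Let V1, V2 > 0, Q > 0, 0 < α < 1, 0 < Q1 < αQ, s3 ≥ 0, and set s1 = V1/(Q−αQ), s2 = V2/Q. Suppose γ1, γ2 : ℝ → ℝ satisfy the exact difference relations (V1/s1)(γ1(t+s1) − γ1(t)) = (Q−αQ)(γ2(t) − γ1(t)) and (V2/s2)(γ2(t+s2) − γ2(t)) = (Q−αQ)γ1(t) + Q1 + (αQ−Q1)γ2(t−s3) − Qγ2(t) for all t. Then γ1(t+s1) = γ2(t) for all t, and γ1 satisfies the ADE γ1(t) = (Q1/Q)(1 − γ1(t−s2−s3)) + α γ1(t−s2−s3) + (1−α)γ1(t−s1−s2) for all t. -/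
import Mathlib


theorem ADE_is_forward_Euler_of_DDE
    (Q α Q1 V1 V2 s3 : ℝ) (hV1 : 0 < V1) (hV2 : 0 < V2) (hQ : 0 < Q)
    (hα0 : 0 < α) (hα1 : α < 1) (hQ1 : 0 < Q1) (hQ1α : Q1 < α * Q) (hs3 : 0 ≤ s3)
    (s1 s2 : ℝ) (hs1 : s1 = V1 / (Q - α * Q)) (hs2 : s2 = V2 / Q)
    (γ1 γ2 : ℝ → ℝ)
    (hE1 : ∀ t : ℝ, (V1 / s1) * (γ1 (t + s1) - γ1 t) = (Q - α * Q) * (γ2 t - γ1 t))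
    (hE2 : ∀ t : ℝ, (V2 / s2) * (γ2 (t + s2) - γ2 t) =
      (Q - α * Q) * γ1 t + Q1 + (α * Q - Q1) * γ2 (t - s3) - Q * γ2 t) :
    (∀ t : ℝ, γ1 (t + s1) = γ2 t) ∧
    (∀ t : ℝ, γ1 t = (Q1 / Q) * (1 - γ1 (t - s2 - s3)) + α * γ1 (t - s2 - s3) +
      (1 - α) * γ1 (t - s1 - s2)) := by
  have hQα : 0 < Q - α * Q := by nlinarith
  have h1 : V1 / s1 = Q - α * Q := by
    rw [hs1]; field_simp
  have h2 : V2 / s2 = Q := by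
    rw [hs2]; field_simp
  have key1 : ∀ t : ℝ, γ1 (t + s1) = γ2 t := by
    intro t
    have := hE1 t
    rw [h1] at this
    have h := mul_left_cancel₀ (ne_of_gt hQα) this
    linarith
  refine ⟨key1, fun t => ?_⟩
  have hE2' := hE2 (t - s1 - s2)
  rw [h2] at hE2'
  have e1 : γ2 (t - s1 - s2 + s2) = γ1 t := by
    rw [← key1]; ring_nf
  have e2 : γ2 (t - s1 - s2) = γ1 (t - s2) := by
    rw [← key1]; ring_nf
  have e3 : γ2 (t - s1 - s2 - s3) = γ1 (t - s2 - s3) := by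
    rw [← key1]; ring_nf
  rw [e1, e2, e3] at hE2'
  have hQne : Q ≠ 0 := ne_of_gt hQ
  field_simp
  nlinarith [hE2']
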